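/- The surface in ℙ¹ × ℙ¹ × ℙ¹ defined by (s_1² − t_1²)(s_2² − t_2²)(s_3² − t_3²) − 8 s_1 s_2 s_3 t_1 t_2 t_3 = 0 is smooth and irreducible. -/

import Mathlib

/-!
Smoothness: put `Aᵢ = sᵢ² - tᵢ²`, `mᵢ = sᵢ tᵢ`, `qᵢ = sᵢ² + tᵢ²`. As `(sᵢ, tᵢ) ≠ 0`, at most one
of `Aᵢ, mᵢ, qᵢ` vanishes, while at a singular point the two partials in `sᵢ, tᵢ` combine to
`qᵢ Aⱼ Aₖ = 0` and `qᵢ mⱼ mₖ = 0`, and these relations cannot all hold.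

Irreducibility: as a quadratic `a s₁² + b s₁ + c` over `ℂ[t₁, s₂, t₂, s₃, t₃]`, `diceF` has
`a = (s₂² - t₂²)(s₃² - t₃²)`, `b = -8 t₁ s₂ t₂ s₃ t₃` and `c = -t₁² a`. No variable divides `a`,
so `a` and `b` are coprime and there is no factor of degree `0` in `s₁`. A product of two linear
factors would make `b² - 4ac` a square, but its specialization at
`(t₁, s₂, t₂, s₃, t₃) = (1, x, 1, 1, 2)` is `36 x⁴ + 184 x² + 36`, which is not one.
-/

open MvPolynomial

/-- The trihomogeneous polynomial
`(s₁² − t₁²)(s₂² − t₂²)(s₃² − t₃²) − 8 s₁ s₂ s₃ t₁ t₂ t₃`, in variables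
`s₁ = X 0, t₁ = X 1, s₂ = X 2, t₂ = X 3, s₃ = X 4, t₃ = X 5`. -/
noncomputable def diceF : MvPolynomial (Fin 6) ℂ :=
  (X 0 ^ 2 - X 1 ^ 2) * (X 2 ^ 2 - X 3 ^ 2) * (X 4 ^ 2 - X 5 ^ 2) -
    8 * (X 0 * X 2 * X 4 * X 1 * X 3 * X 5)

section Smoothness

variable {R : Type*} [CommRing R] [IsDomain R] {s t : R}

lemma sq_sub_sq_ne_zero_or_mul_ne_zero (h : ¬(s = 0 ∧ t = 0)) :
    s ^ 2 - t ^ 2 ≠ 0 ∨ s * t ≠ 0 := by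
  by_contra! ⟨hA, hm⟩
  exact h ⟨(pow_eq_zero_iff four_ne_zero).mp (by linear_combination s ^ 2 * hA + s * t * hm),
    (pow_eq_zero_iff four_ne_zero).mp (by linear_combination s * t * hm - t ^ 2 * hA)⟩

lemma mul_ne_zero_or_sq_add_sq_ne_zero (h : ¬(s = 0 ∧ t = 0)) :
    s * t ≠ 0 ∨ s ^ 2 + t ^ 2 ≠ 0 := by
  by_contra! ⟨hm, hq⟩
  exact h ⟨(pow_eq_zero_iff four_ne_zero).mp (by linear_combination s ^ 2 * hq - s * t * hm),
    (pow_eq_zero_iff four_ne_zero).mp (by linear_combination t ^ 2 * hq - s * t * hm)⟩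

variable [NeZero (2 : R)]

lemma eq_zero_of_two_pow_mul_eq_zero {x : R} {n : ℕ} (h : 2 ^ n * x = 0) : x = 0 :=
  (mul_eq_zero.mp h).resolve_left (pow_ne_zero n two_ne_zero)

lemma sq_sub_sq_ne_zero_or_sq_add_sq_ne_zero (h : ¬(s = 0 ∧ t = 0)) :
    s ^ 2 - t ^ 2 ≠ 0 ∨ s ^ 2 + t ^ 2 ≠ 0 := by
  by_contra! ⟨hA, hq⟩
  exact h ⟨(pow_eq_zero_iff two_ne_zero).mp <|
      eq_zero_of_two_pow_mul_eq_zero (n := 1) (by linear_combination hA + hq),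
    (pow_eq_zero_iff two_ne_zero).mp <|
      eq_zero_of_two_pow_mul_eq_zero (n := 1) (by linear_combination hq - hA)⟩

/-- `2 s K - 8 t L` and `-2 t K - 8 s L` are the partial derivatives of
`(s² - t²) K - 8 s t L` in `s` and `t`. -/
lemma sq_add_sq_mul_eq_zero_of_partials_eq_zero {K L : R}
    (hs : 2 * s * K - 8 * t * L = 0) (ht : -2 * t * K - 8 * s * L = 0) :
    (s ^ 2 + t ^ 2) * K = 0 ∧ (s ^ 2 + t ^ 2) * L = 0 :=
  ⟨eq_zero_of_two_pow_mul_eq_zero (n := 1) (by linear_combination s * hs - t * ht),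
    eq_zero_of_two_pow_mul_eq_zero (n := 3) (by linear_combination -(t * hs + s * ht))⟩

theorem dice_no_singular_point {s₁ t₁ s₂ t₂ s₃ t₃ : R}
    (h₁ : ¬(s₁ = 0 ∧ t₁ = 0)) (h₂ : ¬(s₂ = 0 ∧ t₂ = 0)) (h₃ : ¬(s₃ = 0 ∧ t₃ = 0))
    (hF : (s₁ ^ 2 - t₁ ^ 2) * (s₂ ^ 2 - t₂ ^ 2) * (s₃ ^ 2 - t₃ ^ 2) -
      8 * s₁ * s₂ * s₃ * t₁ * t₂ * t₃ = 0) :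
    ¬(2 * s₁ * (s₂ ^ 2 - t₂ ^ 2) * (s₃ ^ 2 - t₃ ^ 2) - 8 * s₂ * s₃ * t₁ * t₂ * t₃ = 0 ∧
      -2 * t₁ * (s₂ ^ 2 - t₂ ^ 2) * (s₃ ^ 2 - t₃ ^ 2) - 8 * s₁ * s₂ * s₃ * t₂ * t₃ = 0 ∧
      2 * s₂ * (s₁ ^ 2 - t₁ ^ 2) * (s₃ ^ 2 - t₃ ^ 2) - 8 * s₁ * s₃ * t₁ * t₂ * t₃ = 0 ∧
      -2 * t₂ * (s₁ ^ 2 - t₁ ^ 2) * (s₃ ^ 2 - t₃ ^ 2) - 8 * s₁ * s₂ * s₃ * t₁ * t₃ = 0 ∧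
      2 * s₃ * (s₁ ^ 2 - t₁ ^ 2) * (s₂ ^ 2 - t₂ ^ 2) - 8 * s₁ * s₂ * t₁ * t₂ * t₃ = 0 ∧
      -2 * t₃ * (s₁ ^ 2 - t₁ ^ 2) * (s₂ ^ 2 - t₂ ^ 2) - 8 * s₁ * s₂ * s₃ * t₁ * t₂ = 0) := by
  rintro ⟨hs₁, ht₁, hs₂, ht₂, hs₃, ht₃⟩
  obtain ⟨hA₁, hm₁⟩ := sq_add_sq_mul_eq_zero_of_partials_eq_zero (s := s₁) (t := t₁)
    (K := (s₂ ^ 2 - t₂ ^ 2) * (s₃ ^ 2 - t₃ ^ 2)) (L := s₂ * t₂ * (s₃ * t₃))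
    (by linear_combination hs₁) (by linear_combination ht₁)
  obtain ⟨hA₂, hm₂⟩ := sq_add_sq_mul_eq_zero_of_partials_eq_zero (s := s₂) (t := t₂)
    (K := (s₁ ^ 2 - t₁ ^ 2) * (s₃ ^ 2 - t₃ ^ 2)) (L := s₁ * t₁ * (s₃ * t₃))
    (by linear_combination hs₂) (by linear_combination ht₂)
  obtain ⟨hA₃, hm₃⟩ := sq_add_sq_mul_eq_zero_of_partials_eq_zero (s := s₃) (t := t₃)
    (K := (s₁ ^ 2 - t₁ ^ 2) * (s₂ ^ 2 - t₂ ^ 2)) (L := s₁ * t₁ * (s₂ * t₂))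
    (by linear_combination hs₃) (by linear_combination ht₃)
  rw [mul_eq_zero, mul_eq_zero] at hA₁ hm₁ hA₂ hm₂ hA₃ hm₃
  -- If all `sᵢ² + tᵢ²` vanish then `(sᵢ² - tᵢ²)² = -4 (sᵢ tᵢ)²`, so squaring `hF` gives
  -- `2⁷ (s₁ t₁ s₂ t₂ s₃ t₃)² = 0`.
  have hq : s₁ ^ 2 + t₁ ^ 2 = 0 → s₂ ^ 2 + t₂ ^ 2 = 0 → s₃ ^ 2 + t₃ ^ 2 = 0 →
      s₁ * t₁ = 0 ∨ s₂ * t₂ = 0 ∨ s₃ * t₃ = 0 := by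
    intro hq₁ hq₂ hq₃
    have e₁ : (s₁ ^ 2 - t₁ ^ 2) ^ 2 = -4 * (s₁ * t₁) ^ 2 := by
      linear_combination (s₁ ^ 2 + t₁ ^ 2) * hq₁
    have e₂ : (s₂ ^ 2 - t₂ ^ 2) ^ 2 = -4 * (s₂ * t₂) ^ 2 := by
      linear_combination (s₂ ^ 2 + t₂ ^ 2) * hq₂
    have e₃ : (s₃ ^ 2 - t₃ ^ 2) ^ 2 = -4 * (s₃ * t₃) ^ 2 := by
      linear_combination (s₃ ^ 2 + t₃ ^ 2) * hq₃
    have hM : 2 ^ 7 * (s₁ * t₁ * (s₂ * t₂) * (s₃ * t₃)) ^ 2 = 0 := by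
      linear_combination
        (-((s₁ ^ 2 - t₁ ^ 2) * (s₂ ^ 2 - t₂ ^ 2) * (s₃ ^ 2 - t₃ ^ 2) +
          8 * s₁ * s₂ * s₃ * t₁ * t₂ * t₃)) * hF
        + (s₂ ^ 2 - t₂ ^ 2) ^ 2 * (s₃ ^ 2 - t₃ ^ 2) ^ 2 * e₁
        + (-4 * (s₁ * t₁) ^ 2) * (s₃ ^ 2 - t₃ ^ 2) ^ 2 * e₂
        + (-4 * (s₁ * t₁) ^ 2) * (-4 * (s₂ * t₂) ^ 2) * e₃
    have hM' := (pow_eq_zero_iff two_ne_zero).mp (eq_zero_of_two_pow_mul_eq_zero hM)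
    rwa [mul_eq_zero, mul_eq_zero, or_assoc] at hM'
  -- Once one `sᵢ² + tᵢ²` vanishes, so do the others, which `hq` excludes. If none vanishes,
  -- two of the `sⱼ² - tⱼ²` and two of the `sⱼ tⱼ` vanish, so both vanish at a common `j`.
  grind [sq_sub_sq_ne_zero_or_mul_ne_zero, sq_sub_sq_ne_zero_or_sq_add_sq_ne_zero,
    mul_ne_zero_or_sq_add_sq_ne_zero]

end Smoothness

namespace Polynomial

variable {R : Type*} [CommRing R] [IsDomain R]

theorem irreducible_C_mul_X_sq_add_C_mul_X_add_C {a b c : R} (hab : IsRelPrime a b)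
    (hd : ¬IsSquare (discrim a b c)) : Irreducible (C a * X ^ 2 + C b * X + C c) := by
  have ha : a ≠ 0 := by
    rintro rfl
    exact hd ⟨b, by simp [discrim, sq]⟩
  have hdeg := natDegree_quadratic (b := b) (c := c) ha
  refine ⟨fun hu ↦ by simpa [hdeg] using natDegree_eq_zero_of_isUnit hu, fun f g hfg ↦ ?_⟩
  wlog! H : f.natDegree ≤ g.natDegree generalizing f g
  · exact (this g f (by rw [hfg, mul_comm]) H.le).symm
  have hf0 : f ≠ 0 := by rintro rfl; simp_all
  have hg0 : g ≠ 0 := by rintro rfl; simp_all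
  have hsum : f.natDegree + g.natDegree = 2 := by rw [← natDegree_mul hf0 hg0, ← hfg, hdeg]
  obtain hf | hf : f.natDegree = 0 ∨ f.natDegree = 1 := by omega
  · left
    rw [eq_C_of_natDegree_eq_zero hf] at hfg ⊢
    refine (hab ⟨g.coeff 2, ?_⟩ ⟨g.coeff 1, ?_⟩).map C
    · simpa using congrArg (coeff · 2) hfg
    · simpa using congrArg (coeff · 1) hfg
  · exfalso
    obtain ⟨u, v, rfl⟩ := exists_eq_X_add_C_of_natDegree_le_one hf.le
    obtain ⟨w, z, rfl⟩ := exists_eq_X_add_C_of_natDegree_le_one (show g.natDegree ≤ 1 by omega)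
    rw [show (C u * X + C v) * (C w * X + C z) =
        C (u * w) * X ^ 2 + C (u * z + v * w) * X + C (v * z) by simp only [C_mul, C_add]; ring]
      at hfg
    have h₂ : a = u * w := by simpa [-map_mul] using congrArg (coeff · 2) hfg
    have h₁ : b = u * z + v * w := by simpa [-map_mul] using congrArg (coeff · 1) hfg
    have h₀ : c = v * z := by simpa [-map_mul] using congrArg (coeff · 0) hfg
    exact hd ⟨u * z - v * w, by rw [discrim, h₂, h₁, h₀]; ring⟩

theorem not_isSquare_quartic [CharZero R] : ¬IsSquare (36 * X ^ 4 + 184 * X ^ 2 + 36 : R[X]) := by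
  rintro ⟨g, hg⟩
  have h4 : (36 * X ^ 4 + 184 * X ^ 2 + 36 : R[X]).natDegree = 4 := by compute_degree!
  have hg0 : g ≠ 0 := by
    rintro rfl
    rw [hg, mul_zero, natDegree_zero] at h4
    omega
  have hg2 : g.natDegree = 2 := by
    rw [hg, natDegree_mul hg0 hg0] at h4
    omega
  obtain ⟨a, b, c, rfl⟩ : ∃ a b c, g = C a * X ^ 2 + C b * X + C c :=
    ⟨g.coeff 2, g.coeff 1, g.coeff 0, by
      rw [g.as_sum_range' 3 (by omega)]
      simp [Finset.sum_range_succ, ← C_mul_X_pow_eq_monomial]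
      ring⟩
  rw [show (C a * X ^ 2 + C b * X + C c) * (C a * X ^ 2 + C b * X + C c) =
      C (a ^ 2) * X ^ 4 + C (2 * a * b) * X ^ 3 + C (2 * a * c + b ^ 2) * X ^ 2 +
        C (2 * b * c) * X + C (c ^ 2) by simp only [map_add, map_mul, map_pow, map_ofNat]; ring]
    at hg
  have e₄ := congrArg (coeff · 4) hg
  have e₃ := congrArg (coeff · 3) hg
  have e₂ := congrArg (coeff · 2) hg
  have e₀ := congrArg (coeff · 0) hg
  simp [-map_mul, -map_pow, -map_add, coeff_X, coeff_C] at e₄ e₃ e₂ e₀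
  obtain rfl | rfl := e₃
  · norm_num at e₄
  · have : (184 : R) ^ 2 = 4 * 36 * 36 := by
      linear_combination (184 + 2 * a * c) * e₂ - 4 * c ^ 2 * e₄ - 144 * e₀
    norm_num at this

end Polynomial

lemma MvPolynomial.isRelPrime_X_of_eval_ne_zero {σ R : Type*} [CommRing R] [IsDomain R]
    {f : MvPolynomial σ R} {i : σ} {x : σ → R} (hx : x i = 0) (hf : eval x f ≠ 0) :
    IsRelPrime f (X i) :=
  (X_prime.irreducible.isRelPrime_iff_not_dvd.mpr fun ⟨g, hg⟩ ↦ hf (by simp [hg, hx])).symm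

-- The coefficients of `diceF` as a quadratic in `s₁ = X 0`, renaming `X (i + 1)` to `X i`.
noncomputable def diceF₂ : MvPolynomial (Fin 5) ℂ := (X 1 ^ 2 - X 2 ^ 2) * (X 3 ^ 2 - X 4 ^ 2)
noncomputable def diceF₁ : MvPolynomial (Fin 5) ℂ := C (-8) * ∏ i, X i
noncomputable def diceF₀ : MvPolynomial (Fin 5) ℂ := -(X 0 ^ 2 * diceF₂)

lemma finSuccEquiv_diceF : finSuccEquiv ℂ 5 diceF =
    Polynomial.C diceF₂ * Polynomial.X ^ 2 + Polynomial.C diceF₁ * Polynomial.X +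
      Polynomial.C diceF₀ := by
  simp only [diceF, diceF₂, diceF₁, diceF₀, Fin.prod_univ_five, map_sub, map_mul, map_pow,
    map_ofNat, map_neg, finSuccEquiv_X_zero, show (1 : Fin 6) = Fin.succ 0 from rfl,
    show (2 : Fin 6) = Fin.succ 1 from rfl, show (3 : Fin 6) = Fin.succ 2 from rfl,
    show (4 : Fin 6) = Fin.succ 3 from rfl, show (5 : Fin 6) = Fin.succ 4 from rfl,
    finSuccEquiv_X_succ]
  ring

lemma isRelPrime_diceF₂_diceF₁ : IsRelPrime diceF₂ diceF₁ := by
  rw [diceF₁, isRelPrime_mul_unit_left_right ((IsUnit.mk0 (-8 : ℂ) (by norm_num)).map C)]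
  refine IsRelPrime.prod_right fun i _ ↦ ?_
  fin_cases i
  · exact isRelPrime_X_of_eval_ne_zero (x := ![0, 1, 2, 1, 2]) rfl (by simp [diceF₂]; norm_num)
  · exact isRelPrime_X_of_eval_ne_zero (x := ![1, 0, 1, 1, 2]) rfl (by simp [diceF₂]; norm_num)
  · exact isRelPrime_X_of_eval_ne_zero (x := ![1, 1, 0, 1, 2]) rfl (by simp [diceF₂]; norm_num)
  · exact isRelPrime_X_of_eval_ne_zero (x := ![1, 1, 2, 0, 1]) rfl (by simp [diceF₂]; norm_num)
  · exact isRelPrime_X_of_eval_ne_zero (x := ![1, 1, 2, 1, 0]) rfl (by simp [diceF₂]; norm_num)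

lemma not_isSquare_discrim_dice : ¬IsSquare (discrim diceF₂ diceF₁ diceF₀) := by
  set φ : MvPolynomial (Fin 5) ℂ →ₐ[ℂ] Polynomial ℂ := aeval ![1, Polynomial.X, 1, 1, 2]
  have hφ : φ (discrim diceF₂ diceF₁ diceF₀) = 36 * .X ^ 4 + 184 * .X ^ 2 + 36 := by
    simp [φ, discrim, diceF₂, diceF₁, diceF₀, Fin.prod_univ_five, Polynomial.C_ofNat]
    ring
  exact fun h ↦ Polynomial.not_isSquare_quartic (hφ ▸ h.map φ)

lemma irreducible_diceF : Irreducible diceF := by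
  rw [← MulEquiv.irreducible_iff (finSuccEquiv ℂ 5).toMulEquiv]
  simpa [finSuccEquiv_diceF] using Polynomial.irreducible_C_mul_X_sq_add_C_mul_X_add_C
    isRelPrime_diceF₂_diceF₁ not_isSquare_discrim_dice

/-- The surface in `ℙ¹ × ℙ¹ × ℙ¹` defined by
`(s₁² − t₁²)(s₂² − t₂²)(s₃² − t₃²) − 8 s₁ s₂ s₃ t₁ t₂ t₃ = 0` is smooth and
irreducible: the defining trihomogeneous polynomial is irreducible, and at every
point of the surface (with `(sᵢ, tᵢ) ≠ (0,0)` for each factor) not all six partial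
derivatives vanish. -/
theorem dice_surface_smooth_irreducible :
    Irreducible diceF ∧
    ∀ s₁ t₁ s₂ t₂ s₃ t₃ : ℂ,
      ¬(s₁ = 0 ∧ t₁ = 0) → ¬(s₂ = 0 ∧ t₂ = 0) → ¬(s₃ = 0 ∧ t₃ = 0) →
      (s₁ ^ 2 - t₁ ^ 2) * (s₂ ^ 2 - t₂ ^ 2) * (s₃ ^ 2 - t₃ ^ 2) -
          8 * s₁ * s₂ * s₃ * t₁ * t₂ * t₃ = 0 →
      ¬(2 * s₁ * (s₂ ^ 2 - t₂ ^ 2) * (s₃ ^ 2 - t₃ ^ 2) - 8 * s₂ * s₃ * t₁ * t₂ * t₃ = 0 ∧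
        -2 * t₁ * (s₂ ^ 2 - t₂ ^ 2) * (s₃ ^ 2 - t₃ ^ 2) - 8 * s₁ * s₂ * s₃ * t₂ * t₃ = 0 ∧
        2 * s₂ * (s₁ ^ 2 - t₁ ^ 2) * (s₃ ^ 2 - t₃ ^ 2) - 8 * s₁ * s₃ * t₁ * t₂ * t₃ = 0 ∧
        -2 * t₂ * (s₁ ^ 2 - t₁ ^ 2) * (s₃ ^ 2 - t₃ ^ 2) - 8 * s₁ * s₂ * s₃ * t₁ * t₃ = 0 ∧
        2 * s₃ * (s₁ ^ 2 - t₁ ^ 2) * (s₂ ^ 2 - t₂ ^ 2) - 8 * s₁ * s₂ * t₁ * t₂ * t₃ = 0 ∧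
        -2 * t₃ * (s₁ ^ 2 - t₁ ^ 2) * (s₂ ^ 2 - t₂ ^ 2) - 8 * s₁ * s₂ * s₃ * t₁ * t₂ = 0) :=
  ⟨irreducible_diceF, fun _ _ _ _ _ _ ↦ dice_no_singular_point⟩
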